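/- arXiv:2005.04110 — 4 statements merged into one kernel-verified Lean document; each statement's English description precedes it below -/
import Mathlib

section
/- Let a : ℤ_{>0} → ℚ and set ĥ^{a}(u) = exp(∑_{r>0} (-1)^{r-1} a_r h_r u^r / r) in Q[h_r | r>0][[u]]. Then all coefficients of ĥ^{a}(u) lie in the ℤ-subalgebra ℤ[ĥ_k | k > 0] (where ĥ(u) = ĥ^{1}(u) for the constant function 1) if and only if for every n > 0, the Möbius convolution (μ * a)(n) = ∑_{d | n} μ(n/d) a_d is an integer divisible by n. -/
/-!
Write `ĥ^a(u) = exp (∑ x_n u^n / n)` with `x_n = a_n (-1)^(n-1) h_n`. For a subring `S` of a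
`ℚ`-algebra, the sequences `x` for which this exponential has coefficients in `S` form an additive
group `expIntegral S`: exponentials of sums are products, and a series in `S⟦u⟧` with constant
term `1` is invertible there. Writing `V_l[σ]` for the ghost vector of the big Witt vector with the
single entry `σ` in position `l`, the series of `V_l[σ]` is `-log (1 - σ u^l)`, so `V_l[σ]` lies in
the group when `σ ∈ S`; and `x` lies in the group as soon as it agrees with a member on every
initial segment. Conversely, if `x` and `y` lie in the group and agree below `n`, the
`u^n`-coefficient of the exponential of `x - y` is `(x_n - y_n) / n`, which therefore lies in `S`.

For sufficiency, let `a_n = ∑_{d ∣ n} d b_d` with `b_d ∈ ℤ` (Möbius inversion). The converse step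
applied to `a ≡ 1` puts the Witt coordinates `ρ_e` of `((-1)^(n-1) h_n)` in `ℤ[ĥ_k]`, and the
product rule `V_d[1] V_e[ρ] = gcd(d,e) V_{lcm(d,e)}[ρ^(d/gcd(d,e))]` writes `a • x` on each initial
segment as an integral combination of such `V_l[σ]`.

For necessity, the specialisation `h_r ↦ (-1)^(r-1)` sends `ĥ_k` to `1` and `ĥ^a` to
`exp (∑ a_n u^n / n)`, which therefore has integer coefficients; writing `a_n = ∑_{d ∣ n} d c_d`,
the converse step gives `c_n = (μ * a)(n) / n ∈ ℤ` by induction on `n`.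
-/

open PowerSeries

/-- The polynomial algebra `ℚ[h_r | r > 0]`, with `X r` (for `r ≥ 1`) playing the
role of `h_r`. -/
abbrev Rh : Type := MvPolynomial ℕ ℚ

/-- Formal exponential of a power series (intended for series with zero constant term). -/
noncomputable def expS {A : Type*} [CommRing A] [Algebra ℚ A] (f : PowerSeries A) :
    PowerSeries A :=
  PowerSeries.mk fun k =>
    ∑ n ∈ Finset.range (k + 1), (n.factorial : ℚ)⁻¹ • PowerSeries.coeff k (f ^ n)

/-- The series `∑_{r>0} (-1)^{r-1} a_r h_r u^r / r` for a function `a`. -/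
noncomputable def La (a : ℕ → ℚ) : PowerSeries Rh :=
  PowerSeries.mk fun n =>
    if n = 0 then 0
    else ((-1 : ℚ) ^ (n - 1) * a n * (n : ℚ)⁻¹) • MvPolynomial.X n

/-- The coefficient `ĥ_k` of `ĥ(u) = exp(∑_{r>0} (-1)^{r-1} h_r u^r/r)`
(the case `a ≡ 1`). -/
noncomputable def hhat (k : ℕ) : Rh := PowerSeries.coeff k (expS (La fun _ => 1))

open Finset

section CoeffSubring

variable {A : Type*} [CommRing A] (S : Subring A)

noncomputable def powerSeriesSubring : Subring A⟦X⟧ := (map S.subtype).range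

variable {S}

lemma mem_powerSeriesSubring {f : A⟦X⟧} : f ∈ powerSeriesSubring S ↔ ∀ n, coeff n f ∈ S := by
  refine ⟨?_, fun h => ⟨mk fun n => ⟨coeff n f, h n⟩, by ext; simp⟩⟩
  rintro ⟨g, rfl⟩ n
  simp

lemma mem_powerSeriesSubring_of_mul_eq_one {f g : A⟦X⟧} (hf : f ∈ powerSeriesSubring S)
    (hf₀ : constantCoeff f = 1) (hfg : f * g = 1) : g ∈ powerSeriesSubring S := by
  obtain ⟨f', rfl⟩ := hf
  obtain ⟨u, rfl⟩ : IsUnit f' := isUnit_iff_constantCoeff.mpr <| by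
    rw [← coeff_zero_eq_constantCoeff_apply, coeff_map, coeff_zero_eq_constantCoeff_apply] at hf₀
    simp [Subtype.ext (hf₀.trans S.coe_one.symm)]
  refine ⟨↑u⁻¹, ?_⟩
  calc map S.subtype ↑u⁻¹ = map S.subtype ↑u⁻¹ * (map S.subtype ↑u * g) := by rw [hfg, mul_one]
    _ = g := by rw [← mul_assoc, ← map_mul, Units.inv_mul, map_one, one_mul]

lemma rescale_mem_powerSeriesSubring {f : A⟦X⟧} (hf : f ∈ powerSeriesSubring S) {r : A}
    (hr : r ∈ S) : rescale r f ∈ powerSeriesSubring S := by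
  rw [mem_powerSeriesSubring] at hf ⊢
  intro n
  rw [coeff_rescale]
  exact S.mul_mem (S.pow_mem hr n) (hf n)

lemma expand_mem_powerSeriesSubring {f : A⟦X⟧} (hf : f ∈ powerSeriesSubring S) {l : ℕ}
    (hl : l ≠ 0) : expand l hl f ∈ powerSeriesSubring S := by
  rw [mem_powerSeriesSubring] at hf ⊢
  intro n
  rw [coeff_expand]
  split_ifs
  exacts [hf _, S.zero_mem]

end CoeffSubring

section Ghost

variable {A : Type*} [CommRing A]

/-- The ghost vector `V_l[σ]` of the big Witt vector with the single entry `σ` in position `l`;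
its `logSeries` is `-log (1 - σ X ^ l)`. -/
def ghostSingle (l : ℕ) (σ : A) (n : ℕ) : A := if l ∣ n then l * σ ^ (n / l) else 0

lemma ghostSingle_of_not_dvd {l n : ℕ} (σ : A) (h : ¬ l ∣ n) : ghostSingle l σ n = 0 :=
  if_neg h

@[simp]
lemma ghostSingle_zero_left (σ : A) : ghostSingle 0 σ = 0 := by
  ext n
  simp [ghostSingle]

lemma ghostSingle_self {n : ℕ} (hn : n ≠ 0) (σ : A) : ghostSingle n σ n = n * σ := by
  simp [ghostSingle, Nat.div_self (Nat.pos_of_ne_zero hn)]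

lemma ghostSingle_one_mul_ghostSingle (d e : ℕ) (σ : A) :
    ghostSingle d 1 * ghostSingle e σ =
      d.gcd e • ghostSingle (d.lcm e) (σ ^ (d / d.gcd e)) := by
  ext q
  rcases Nat.eq_zero_or_pos d with rfl | hd
  · simp
  rcases Nat.eq_zero_or_pos e with rfl | he
  · simp
  by_cases hq : d ∣ q ∧ e ∣ q
  · have hlcm : d.lcm e = d / d.gcd e * e := by
      rw [Nat.div_mul_right_comm (Nat.gcd_dvd_left d e)]; rfl
    obtain ⟨t, rfl⟩ := Nat.lcm_dvd hq.1 hq.2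
    have hexp : d.lcm e * t / e = d / d.gcd e * t := by
      rw [hlcm, mul_right_comm, Nat.mul_div_cancel _ he]
    have hcoeff : (d * e : A) = d.gcd e * d.lcm e := by
      rw [← Nat.cast_mul, ← Nat.cast_mul, Nat.gcd_mul_lcm]
    simp only [Pi.mul_apply, Pi.smul_apply, ghostSingle, if_pos hq.1, if_pos hq.2,
      if_pos (dvd_mul_right _ t), one_pow, mul_one, nsmul_eq_mul, hexp,
      Nat.mul_div_cancel_left t (Nat.lcm_pos hd he), ← pow_mul, ← mul_assoc, hcoeff]
  · have hl : ¬ d.lcm e ∣ q := fun h => hq (Nat.lcm_dvd_iff.mp h)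
    rw [not_and_or] at hq
    rcases hq with hq | hq <;>
      simp [ghostSingle_of_not_dvd _ hq, ghostSingle_of_not_dvd _ hl]

end Ghost

lemma sum_range_eq_sum_divisors {M : Type*} [AddCommMonoid M] {g : ℕ → ℕ → M}
    (hg : ∀ e q, ¬ e ∣ q → g e q = 0) {q N : ℕ} (hq : 0 < q) (hqN : q < N) :
    ∑ e ∈ range N, g e q = ∑ e ∈ q.divisors, g e q := by
  refine (sum_subset (fun e he => ?_) fun e _ he => hg e q fun h => he ?_).symm
  · exact mem_range.mpr ((Nat.divisor_le he).trans_lt hqN)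
  · exact Nat.mem_divisors.mpr ⟨h, hq.ne'⟩

section ExpLog

variable {A : Type*} [CommRing A] [Algebra ℚ A]

lemma constantCoeff_expS (f : A⟦X⟧) : constantCoeff (expS f) = 1 := by
  rw [← coeff_zero_eq_constantCoeff_apply]
  simp [expS]

lemma coeff_pow_eq_zero_of_lt {R : Type*} [CommRing R] {f : R⟦X⟧} (hf : constantCoeff f = 0)
    {k n : ℕ} (h : k < n) : coeff k (f ^ n) = 0 :=
  X_pow_dvd_iff.mp (pow_dvd_pow_of_dvd (X_dvd_iff.mpr hf) n) k h

lemma expS_eq_subst {f : A⟦X⟧} (hf : constantCoeff f = 0) : expS f = (exp A).subst f := by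
  ext k
  rw [coeff_subst' (HasSubst.of_constantCoeff_zero' hf),
    finsum_eq_sum_of_support_subset (s := range (k + 1))]
  · simp [expS, coeff_exp, Algebra.smul_def]
  · intro n hn
    by_contra! hk
    simp only [coe_range, Set.mem_Iio, not_lt] at hk
    exact hn (by simp only [coeff_pow_eq_zero_of_lt hf hk, smul_zero])

lemma derivative_expS {f : A⟦X⟧} (hf : constantCoeff f = 0) :
    d⁄dX A (expS f) = d⁄dX A f * expS f := by
  rw [expS_eq_subst hf, derivative_subst (HasSubst.of_constantCoeff_zero' hf), derivative_exp,
    mul_comm]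

lemma eq_expS_of_derivative_eq_mul {f y : A⟦X⟧} (hf : constantCoeff f = 0)
    (hy : d⁄dX A y = d⁄dX A f * y) (hy₀ : constantCoeff y = 1) : y = expS f := by
  have := IsAddTorsionFree.of_module_rat A
  obtain ⟨u, hu⟩ : IsUnit (expS f) := isUnit_iff_constantCoeff.mpr (by simp [constantCoeff_expS])
  have hinv : (↑u⁻¹ : A⟦X⟧) * expS f = 1 := by rw [← hu, Units.inv_mul]
  -- `y / expS f` has derivative zero
  have hquot : y * ↑u⁻¹ = 1 := by
    apply derivative.ext
    · rw [Derivation.leibniz, derivative_inv, hu, derivative_expS hf, hy, smul_eq_mul, smul_eq_mul,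
        derivative_one]
      linear_combination (-(y * ↑u⁻¹ * d⁄dX A f)) * hinv
    · have h1 : constantCoeff (↑u⁻¹ : A⟦X⟧) * constantCoeff (expS f) = 1 := by
        rw [← map_mul, hinv, map_one]
      rw [constantCoeff_expS, mul_one] at h1
      simp [hy₀, h1]
  calc y = y * ↑u⁻¹ * u := by simp [mul_assoc]
    _ = expS f := by rw [hquot, one_mul, hu]

lemma expS_zero : expS (0 : A⟦X⟧) = 1 :=
  (eq_expS_of_derivative_eq_mul (map_zero _) (by simp) (map_one _)).symm

lemma expS_add {f g : A⟦X⟧} (hf : constantCoeff f = 0) (hg : constantCoeff g = 0) :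
    expS (f + g) = expS f * expS g := by
  refine (eq_expS_of_derivative_eq_mul (by simp [hf, hg]) ?_ (by simp [constantCoeff_expS])).symm
  rw [Derivation.leibniz, derivative_expS hf, derivative_expS hg, map_add, smul_eq_mul,
    smul_eq_mul]
  ring

lemma expS_subst {f g : A⟦X⟧} (hf : constantCoeff f = 0) (hg : constantCoeff g = 0) :
    expS (f.subst g) = (expS f).subst g := by
  have hg' := HasSubst.of_constantCoeff_zero' hg
  rw [expS_eq_subst hf, subst_comp_subst_apply (HasSubst.of_constantCoeff_zero' hf) hg',
    expS_eq_subst (constantCoeff_subst_eq_zero hg _ hf)]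

lemma expS_rescale {f : A⟦X⟧} (hf : constantCoeff f = 0) (r : A) :
    expS (rescale r f) = rescale r (expS f) := by
  rw [rescale_eq_subst, rescale_eq_subst, expS_subst hf (by simp)]

lemma expS_expand {f : A⟦X⟧} (hf : constantCoeff f = 0) {l : ℕ} (hl : l ≠ 0) :
    expS (expand l hl f) = expand l hl (expS f) := by
  rw [expand_apply, expand_apply, expS_subst hf (by simp [hl])]

lemma map_expS {B : Type*} [CommRing B] [Algebra ℚ B] (φ : A →ₐ[ℚ] B) (f : A⟦X⟧) :
    map (φ : A →+* B) (expS f) = expS (map (φ : A →+* B) f) := by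
  ext k
  simp [expS, coeff_map, ← map_pow]

lemma coeff_expS_congr {f g : A⟦X⟧} {N : ℕ} (h : ∀ q ≤ N, coeff q f = coeff q g) {k : ℕ}
    (hk : k ≤ N) : coeff k (expS f) = coeff k (expS g) := by
  have htrunc : trunc (N + 1) f = trunc (N + 1) g := by
    ext q
    simp only [coeff_trunc]
    split_ifs with hq
    · exact h q (by omega)
    · rfl
  have hpow (n : ℕ) : coeff k (f ^ n) = coeff k (g ^ n) := by
    rw [← coeff_coe_trunc_of_lt (Nat.lt_succ_of_le hk), ← trunc_trunc_pow, htrunc,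
      trunc_trunc_pow, coeff_coe_trunc_of_lt (Nat.lt_succ_of_le hk)]
  simp only [expS, coeff_mk, hpow]

lemma coeff_expS_of_coeff_eq_zero {f : A⟦X⟧} {n : ℕ} (hn : 0 < n) (hf : ∀ q < n, coeff q f = 0) :
    coeff n (expS f) = coeff n f := by
  have hX : X ^ n ∣ f := X_pow_dvd_iff.mpr hf
  rw [expS, coeff_mk, sum_eq_single 1]
  · simp
  · intro m _ hm1
    rcases Nat.lt_or_gt_of_ne hm1 with hm | hm
    · simp [Nat.lt_one_iff.mp hm, coeff_one, hn.ne']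
    · have : X ^ (n * m) ∣ f ^ m := by rw [pow_mul]; exact pow_dvd_pow_of_dvd hX m
      rw [X_pow_dvd_iff.mp this n (by nlinarith), smul_zero]
  · simp [hn.ne']

/-- The index `n = 0` contributes nothing, since `(0 : ℚ)⁻¹ = 0`. -/
noncomputable def logSeries : (ℕ → A) →ₗ[ℚ] A⟦X⟧ where
  toFun x := mk fun n => (n : ℚ)⁻¹ • x n
  map_add' x y := by ext; simp
  map_smul' c x := by ext; simp [smul_comm c]

@[simp]
lemma coeff_logSeries (x : ℕ → A) (n : ℕ) : coeff n (logSeries x) = (n : ℚ)⁻¹ • x n := by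
  simp [logSeries]

@[simp]
lemma constantCoeff_logSeries (x : ℕ → A) : constantCoeff (logSeries x) = 0 := by
  simp [← coeff_zero_eq_constantCoeff_apply]

lemma map_logSeries {B : Type*} [CommRing B] [Algebra ℚ B] (φ : A →ₐ[ℚ] B) (x : ℕ → A) :
    map (φ : A →+* B) (logSeries x) = logSeries (φ ∘ x) := by
  ext n
  simp [coeff_map]

lemma expS_logSeries_one : expS (logSeries (1 : ℕ → A)) = PowerSeries.mk 1 := by
  have hL : d⁄dX A (logSeries (1 : ℕ → A)) = PowerSeries.mk 1 := by
    ext n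
    rw [coeff_derivative, coeff_logSeries, coeff_mk, Pi.one_apply, Pi.one_apply, Algebra.smul_def,
      mul_one, show ((n : A) + 1) = algebraMap ℚ A (n + 1) by simp, ← map_mul]
    simp [inv_mul_cancel₀ (show ((n : ℚ) + 1) ≠ 0 by positivity)]
  have hG : d⁄dX A (PowerSeries.mk 1 : A⟦X⟧) = PowerSeries.mk 1 * PowerSeries.mk 1 := by
    have h := congrArg (d⁄dX A) (mk_one_mul_one_sub_eq_one A)
    rw [Derivation.leibniz, map_sub, derivative_one, derivative_X, smul_eq_mul, smul_eq_mul] at h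
    linear_combination
      (PowerSeries.mk 1 : A⟦X⟧) * h - d⁄dX A (PowerSeries.mk 1 : A⟦X⟧) * mk_one_mul_one_sub_eq_one A
  refine (eq_expS_of_derivative_eq_mul (constantCoeff_logSeries _) ?_ ?_).symm
  · rw [hG, hL]
  · rw [← coeff_zero_eq_constantCoeff_apply, coeff_mk, Pi.one_apply]

/-- Inverse of the ghost map `ρ ↦ (∑_{e ∣ n} e ρ_e ^ (n / e))_n`, bijective over a `ℚ`-algebra. -/
noncomputable def wittOfGhost (x : ℕ → A) (n : ℕ) : A :=
  (n : ℚ)⁻¹ • (x n - ∑ e ∈ n.properDivisors.attach, (e : A) * wittOfGhost x e ^ (n / e))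
termination_by n
decreasing_by exact (Nat.mem_properDivisors.mp e.2).2

lemma sum_divisors_ghostSingle_wittOfGhost (x : ℕ → A) {n : ℕ} (hn : 0 < n) :
    ∑ e ∈ n.divisors, ghostSingle e (wittOfGhost x e) n = x n := by
  have hrec : (n : A) * wittOfGhost x n =
      x n - ∑ e ∈ n.properDivisors, (e : A) * wittOfGhost x e ^ (n / e) := by
    rw [wittOfGhost, sum_attach n.properDivisors (fun e => (e : A) * wittOfGhost x e ^ (n / e)),
      ← nsmul_eq_mul, ← Nat.cast_smul_eq_nsmul ℚ, smul_smul,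
      mul_inv_cancel₀ (Nat.cast_ne_zero.mpr hn.ne'), one_smul]
  have hproper : ∑ e ∈ n.properDivisors, ghostSingle e (wittOfGhost x e) n =
      ∑ e ∈ n.properDivisors, (e : A) * wittOfGhost x e ^ (n / e) :=
    sum_congr rfl fun e he => if_pos (Nat.mem_properDivisors.mp he).1
  rw [← Nat.cons_self_properDivisors hn.ne', sum_cons, ghostSingle_self hn.ne', hproper]
  linear_combination hrec

lemma inv_smul_natCast_mul {n : ℕ} (hn : n ≠ 0) (z : A) : (n : ℚ)⁻¹ • ((n : A) * z) = z := by
  rw [← nsmul_eq_mul, ← Nat.cast_smul_eq_nsmul ℚ, smul_smul,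
    inv_mul_cancel₀ (Nat.cast_ne_zero.mpr hn), one_smul]

lemma logSeries_ghostSingle {l : ℕ} (hl : l ≠ 0) (σ : A) :
    logSeries (ghostSingle l σ) = expand l hl (rescale σ (logSeries 1)) := by
  ext n
  rw [coeff_logSeries, coeff_expand]
  split_ifs with h
  · obtain ⟨m, rfl⟩ := h
    rw [coeff_rescale, coeff_logSeries, ghostSingle, if_pos (dvd_mul_right l m),
      Nat.mul_div_cancel_left m (Nat.pos_of_ne_zero hl), Pi.one_apply, Nat.cast_mul, mul_inv_rev,
      mul_smul, inv_smul_natCast_mul hl, mul_smul_comm, mul_one]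
  · rw [ghostSingle_of_not_dvd σ h, smul_zero]

variable (S : Subring A)

noncomputable def expIntegral : AddSubgroup (ℕ → A) where
  carrier := {x | expS (logSeries x) ∈ powerSeriesSubring S}
  add_mem' {x y} hx hy := by
    change expS (logSeries (x + y)) ∈ powerSeriesSubring S
    rw [map_add, expS_add (constantCoeff_logSeries x) (constantCoeff_logSeries y)]
    exact mul_mem hx hy
  zero_mem' := by
    change expS (logSeries (0 : ℕ → A)) ∈ powerSeriesSubring S
    rw [map_zero, expS_zero]
    exact one_mem _
  neg_mem' {x} hx := mem_powerSeriesSubring_of_mul_eq_one hx (constantCoeff_expS _) <| by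
    rw [← expS_add (constantCoeff_logSeries _) (constantCoeff_logSeries _), ← map_add,
      add_neg_cancel, map_zero, expS_zero]

variable {S}

lemma mem_expIntegral {x : ℕ → A} :
    x ∈ expIntegral S ↔ expS (logSeries x) ∈ powerSeriesSubring S :=
  Iff.rfl

lemma ghostSingle_mem_expIntegral (l : ℕ) {σ : A} (hσ : σ ∈ S) :
    ghostSingle l σ ∈ expIntegral S := by
  rcases eq_or_ne l 0 with rfl | hl
  · rw [ghostSingle_zero_left]
    exact zero_mem _
  have h₀ : constantCoeff (rescale σ (logSeries (1 : ℕ → A))) = 0 := by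
    rw [← coeff_zero_eq_constantCoeff_apply, coeff_rescale, coeff_logSeries]
    simp
  rw [mem_expIntegral, logSeries_ghostSingle hl, expS_expand h₀ hl,
    expS_rescale (constantCoeff_logSeries _), expS_logSeries_one]
  refine expand_mem_powerSeriesSubring (rescale_mem_powerSeriesSubring ?_ hσ) hl
  exact mem_powerSeriesSubring.mpr fun n => by rw [coeff_mk]; exact S.one_mem

lemma mem_expIntegral_of_forall_exists {x : ℕ → A}
    (h : ∀ N, ∃ y ∈ expIntegral S, ∀ q, 0 < q → q ≤ N → x q = y q) : x ∈ expIntegral S := by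
  refine mem_powerSeriesSubring.mpr fun N => ?_
  obtain ⟨y, hy, hxy⟩ := h N
  rw [coeff_expS_congr (g := logSeries y) (fun q hq => ?_) le_rfl]
  · exact mem_powerSeriesSubring.mp hy N
  rcases Nat.eq_zero_or_pos q with rfl | hq₀
  · simp
  · rw [coeff_logSeries, coeff_logSeries, hxy q hq₀ hq]

lemma inv_smul_mem_of_eq_sum_divisors {x : ℕ → A} (hx : x ∈ expIntegral S)
    {g : ℕ → ℕ → A} (hg_dvd : ∀ e q, ¬ e ∣ q → g e q = 0) {n : ℕ} (hn : 0 < n)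
    (hg : ∀ e < n, g e ∈ expIntegral S)
    (hxg : ∀ q, 0 < q → q ≤ n → x q = ∑ e ∈ q.divisors, g e q) : (n : ℚ)⁻¹ • g n n ∈ S := by
  have hy : ∑ e ∈ range n, g e ∈ expIntegral S := sum_mem fun e he => hg e (mem_range.mp he)
  have hxy : ∀ q, 0 < q → q ≤ n →
      x q - (∑ e ∈ range n, g e) q = if q = n then g n n else 0 := by
    intro q hq hqn
    rw [hxg q hq hqn, ← sum_range_eq_sum_divisors hg_dvd hq (Nat.lt_succ_of_le hqn),
      sum_range_succ, Finset.sum_apply, add_sub_cancel_left]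
    split_ifs with h
    · rw [h]
    · exact hg_dvd n q fun hdvd => h (le_antisymm hqn (Nat.le_of_dvd hq hdvd))
  have hcoeff := mem_powerSeriesSubring.mp (mem_expIntegral.mp (sub_mem hx hy)) n
  rw [coeff_expS_of_coeff_eq_zero hn (fun q hq => ?_)] at hcoeff
  · rwa [coeff_logSeries, Pi.sub_apply, hxy n hn le_rfl, if_pos rfl] at hcoeff
  rcases Nat.eq_zero_or_pos q with rfl | hq₀
  · simp
  · rw [coeff_logSeries, Pi.sub_apply, hxy q hq₀ hq.le, if_neg hq.ne, smul_zero]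

lemma wittOfGhost_mem {x : ℕ → A} (hx : x ∈ expIntegral S) (n : ℕ) : wittOfGhost x n ∈ S := by
  induction n using Nat.strong_induction_on with
  | _ n ih =>
    rcases Nat.eq_zero_or_pos n with rfl | hn
    · rw [wittOfGhost, Nat.cast_zero, inv_zero, zero_smul]
      exact zero_mem S
    have h := inv_smul_mem_of_eq_sum_divisors hx (g := fun e => ghostSingle e (wittOfGhost x e))
      (fun e q he => ghostSingle_of_not_dvd _ he) hn
      (fun e he => ghostSingle_mem_expIntegral e (ih e he))
      (fun q hq _ => (sum_divisors_ghostSingle_wittOfGhost x hq).symm)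
    rwa [ghostSingle_self hn.ne', inv_smul_natCast_mul hn.ne'] at h

theorem smul_mem_expIntegral {x : ℕ → A} (hx : x ∈ expIntegral S) {a : ℕ → ℚ} (b : ℕ → ℤ)
    (hab : ∀ n, 0 < n → ∑ d ∈ n.divisors, ((d : ℕ) : ℚ) * b d = a n) :
    (fun n => a n • x n) ∈ expIntegral S := by
  refine mem_expIntegral_of_forall_exists fun N => ⟨∑ d ∈ range (N + 1), ∑ e ∈ range (N + 1),
    b d • (ghostSingle d 1 * ghostSingle e (wittOfGhost x e)), ?_, fun q hq hqN => ?_⟩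
  · refine sum_mem fun d _ => sum_mem fun e _ => zsmul_mem ?_ _
    rw [ghostSingle_one_mul_ghostSingle]
    exact nsmul_mem (ghostSingle_mem_expIntegral _ (pow_mem (wittOfGhost_mem hx e) _)) _
  have hqN' : q < N + 1 := Nat.lt_succ_of_le hqN
  calc a q • x q
      = (∑ d ∈ q.divisors, b d • ghostSingle d (1 : A) q) *
          ∑ e ∈ q.divisors, ghostSingle e (wittOfGhost x e) q := by
        rw [sum_divisors_ghostSingle_wittOfGhost x hq, ← hab q hq, sum_smul, sum_mul]
        refine sum_congr rfl fun d hd => ?_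
        rw [ghostSingle, if_pos (Nat.mem_divisors.mp hd).1, one_pow, mul_one, mul_comm, mul_smul,
          Int.cast_smul_eq_zsmul, Nat.cast_smul_eq_nsmul, nsmul_eq_mul, smul_mul_assoc]
    _ = (∑ d ∈ range (N + 1), b d • ghostSingle d (1 : A) q) *
          ∑ e ∈ range (N + 1), ghostSingle e (wittOfGhost x e) q := by
        rw [sum_range_eq_sum_divisors (g := fun d q => b d • ghostSingle d (1 : A) q)
            (fun d q hd => by rw [ghostSingle_of_not_dvd _ hd, smul_zero]) hq hqN',
          sum_range_eq_sum_divisors (fun e q he => ghostSingle_of_not_dvd _ he) hq hqN']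
    _ = _ := by
        simp only [sum_mul_sum, smul_mul_assoc, Finset.sum_apply, Pi.smul_apply, Pi.mul_apply]

end ExpLog

open ArithmeticFunction in
lemma sum_divisors_mul_eq_iff {a c : ℕ → ℚ} :
    (∀ n, 0 < n → ∑ d ∈ n.divisors, ((d : ℕ) : ℚ) * c d = a n) ↔
      ∀ n, 0 < n → ∑ d ∈ n.divisors, ((moebius (n / d) : ℤ) : ℚ) * a d = n * c n := by
  have h := sum_eq_iff_sum_smul_moebius_eq (f := fun d => (d : ℚ) * c d) (g := a)
  simpa only [zsmul_eq_mul, Nat.sum_divisorsAntidiagonal' fun u v => ((moebius u : ℤ) : ℚ) * a v]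
    using h

lemma mem_bot_of_mem_expIntegral_bot {a c : ℕ → ℚ} (ha : a ∈ expIntegral (⊥ : Subring ℚ))
    (hac : ∀ n, 0 < n → ∑ d ∈ n.divisors, ((d : ℕ) : ℚ) * c d = a n) {n : ℕ} (hn : 0 < n) :
    c n ∈ (⊥ : Subring ℚ) := by
  induction n using Nat.strong_induction_on with
  | _ n ih =>
    have h := inv_smul_mem_of_eq_sum_divisors ha (g := fun e => c e • ghostSingle e 1)
      (fun e q he => by rw [Pi.smul_apply, ghostSingle_of_not_dvd _ he, smul_zero]) hn
      (fun e he => ?_) (fun q hq _ => ?_)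
    · convert h using 1
      rw [Pi.smul_apply, ghostSingle_self hn.ne', smul_eq_mul, smul_eq_mul]
      field_simp
    · rcases Nat.eq_zero_or_pos e with rfl | he₀
      · rw [ghostSingle_zero_left, smul_zero]
        exact zero_mem _
      obtain ⟨z, hz⟩ := Subring.mem_bot.mp (ih e he he₀)
      rw [← hz, Int.cast_smul_eq_zsmul]
      exact zsmul_mem (ghostSingle_mem_expIntegral e (one_mem _)) z
    · rw [← hac q hq]
      refine sum_congr rfl fun d hd => ?_
      rw [Pi.smul_apply, ghostSingle, if_pos (Nat.mem_divisors.mp hd).1, one_pow, mul_one,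
        smul_eq_mul, mul_comm]

noncomputable def signedX (n : ℕ) : Rh := (-1 : ℚ) ^ (n - 1) • MvPolynomial.X n

lemma La_eq_logSeries (a : ℕ → ℚ) : La a = logSeries fun n => a n • signedX n := by
  ext n
  rw [La, coeff_mk, coeff_logSeries, signedX, smul_smul, smul_smul]
  split_ifs with hn
  · simp [hn]
  · ring_nf

noncomputable def evalSigns : Rh →ₐ[ℚ] ℚ := MvPolynomial.aeval fun r => (-1 : ℚ) ^ (r - 1)

lemma evalSigns_coeff_expS_La (a : ℕ → ℚ) (k : ℕ) :
    evalSigns (coeff k (expS (La a))) = coeff k (expS (logSeries a)) := by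
  have hsign (n : ℕ) : evalSigns (a n • signedX n) = a n := by
    simp [evalSigns, signedX, ← mul_pow]
  rw [← RingHom.coe_coe evalSigns, ← coeff_map, map_expS, La_eq_logSeries, map_logSeries]
  congr 3
  exact funext hsign

lemma mem_expIntegral_bot_of_coeff_mem_adjoin {a : ℕ → ℚ}
    (h : ∀ k, coeff k (expS (La a)) ∈ Algebra.adjoin ℤ (Set.range fun k : ℕ => hhat (k + 1))) :
    a ∈ expIntegral (⊥ : Subring ℚ) := by
  have hle : Algebra.adjoin ℤ (Set.range fun k : ℕ => hhat (k + 1)) ≤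
      (⊥ : Subalgebra ℤ ℚ).comap (evalSigns.restrictScalars ℤ) := by
    refine Algebra.adjoin_le ?_
    rintro _ ⟨k, rfl⟩
    unfold hhat
    rw [SetLike.mem_coe, Subalgebra.mem_comap, AlgHom.coe_restrictScalars',
      evalSigns_coeff_expS_La, ← Pi.one_def, expS_logSeries_one, coeff_mk]
    exact one_mem _
  refine mem_powerSeriesSubring.mpr fun k => ?_
  obtain ⟨z, hz⟩ := Algebra.mem_bot.mp (hle (h k))
  refine Subring.mem_bot.mpr ⟨z, ?_⟩
  rw [← evalSigns_coeff_expS_La]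
  simpa using hz

lemma coeff_expS_La_mem_adjoin {a : ℕ → ℚ} (b : ℕ → ℤ)
    (hab : ∀ n, 0 < n → ∑ d ∈ n.divisors, ((d : ℕ) : ℚ) * b d = a n) (k : ℕ) :
    coeff k (expS (La a)) ∈ Algebra.adjoin ℤ (Set.range fun k : ℕ => hhat (k + 1)) := by
  set W := (Algebra.adjoin ℤ (Set.range fun k : ℕ => hhat (k + 1))).toSubring
  have hX : signedX ∈ expIntegral W := by
    refine mem_powerSeriesSubring.mpr fun k => ?_
    cases k with
    | zero => simp [constantCoeff_expS, W.one_mem]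
    | succ k =>
      have : coeff (k + 1) (expS (logSeries signedX)) = hhat (k + 1) := by
        unfold hhat
        simp [La_eq_logSeries]
      rw [this]
      exact Algebra.subset_adjoin ⟨k, rfl⟩
  have := mem_powerSeriesSubring.mp (smul_mem_expIntegral hX b hab) k
  rwa [La_eq_logSeries]

/-- All coefficients of `ĥ^{a}(u) = exp(∑_{r>0} (-1)^{r-1} a_r h_r u^r/r)` lie in
the `ℤ`-subalgebra `ℤ[ĥ_k | k > 0]` iff for every `n > 0` the Möbius convolution
`(μ * a)(n) = ∑_{d ∣ n} μ(n/d) a_d` is an integer divisible by `n`. -/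
theorem stmt11 (a : ℕ → ℚ) :
    (∀ k : ℕ, PowerSeries.coeff k (expS (La a))
        ∈ Algebra.adjoin ℤ (Set.range fun k : ℕ => hhat (k + 1)))
      ↔ ∀ n : ℕ, 0 < n → ∃ z : ℤ,
          (∑ d ∈ n.divisors, ((ArithmeticFunction.moebius (n / d) : ℤ) : ℚ) * a d)
            = (n : ℚ) * (z : ℚ) := by
  constructor
  · intro h n hn
    have hac := (sum_divisors_mul_eq_iff (c := fun n =>
      (∑ d ∈ n.divisors, ((ArithmeticFunction.moebius (n / d) : ℤ) : ℚ) * a d) / n)).mpr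
      fun n hn => by field_simp
    obtain ⟨z, hz⟩ := Subring.mem_bot.mp
      (mem_bot_of_mem_expIntegral_bot (mem_expIntegral_bot_of_coeff_mem_adjoin h) hac hn)
    exact ⟨z, by rw [hz]; field_simp⟩
  · intro h
    choose! b hb using h
    exact coeff_expS_La_mem_adjoin b (sum_divisors_mul_eq_iff.mpr hb)
end

section
/- Let a : ℤ_{>0} → ℤ be a function such that for every prime p, every r ≥ 1, and every m coprime to p, p^r divides a_{m p^r} - a_{m p^{r-1}}. Then for every n > 0, n divides (μ * a)(n) = ∑_{d | n} μ(n/d) a_d. -/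
/-!
It suffices to show `p ^ r ∣ (μ * a)(n)` for each prime power `p ^ r` exactly dividing `n`.
Write `n = m p ^ r` with `p ∤ m` and sum over `d = e c` with `e ∣ m`, `c ∣ p ^ r`, using
`(μ * a)(n) = ∑_{d ∣ n} μ(d) a(n / d)`. Only `c = 1` and `c = p` contribute, so the sum is
`∑_{e ∣ m} μ(e) (a((m/e) p ^ r) - a((m/e) p ^ (r-1)))`, and the hypothesis applies termwise.
-/

open Finset ArithmeticFunction
open scoped ArithmeticFunction.Moebius

theorem Nat.Coprime.sum_divisors_mul_eq_sum_sum {M : Type*} [AddCommMonoid M] {m n : ℕ}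
    (hmn : m.Coprime n) (f : ℕ → M) :
    ∑ d ∈ (m * n).divisors, f d = ∑ e ∈ m.divisors, ∑ c ∈ n.divisors, f (e * c) := by
  rw [hmn.divisors_mul, sum_map, ← sum_product', ← sum_attach (m.divisors ×ˢ n.divisors)]
  rfl

theorem sum_divisors_prime_pow_moebius_mul {p r : ℕ} (hp : p.Prime) (hr : r ≠ 0) (f : ℕ → ℤ) :
    ∑ c ∈ (p ^ r).divisors, μ c * f c = f 1 - f p := by
  obtain ⟨k, rfl⟩ := Nat.exists_eq_succ_of_ne_zero hr
  rw [Nat.sum_divisors_prime_pow hp, sum_range_succ', sum_range_succ']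
  simp [moebius_apply_prime_pow hp, moebius_apply_prime hp, sub_eq_neg_add]

theorem Nat.sum_divisors_div_comm {M : Type*} [AddCommMonoid M] (n : ℕ) (f : ℕ → ℕ → M) :
    ∑ d ∈ n.divisors, f (n / d) d = ∑ d ∈ n.divisors, f d (n / d) := by
  rw [← Nat.sum_divisorsAntidiagonal f, Nat.sum_divisorsAntidiagonal' f]

theorem Int.natCast_dvd_of_forall_prime_pow_factorization_dvd {n : ℕ} {x : ℤ} (hn : n ≠ 0)
    (h : ∀ p : ℕ, p.Prime → (p : ℤ) ^ n.factorization p ∣ x) : (n : ℤ) ∣ x := by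
  rw [Int.natCast_dvd, Nat.dvd_iff_prime_pow_dvd_dvd]
  intro p k hp hk
  have hk : k ≤ n.factorization p := (hp.pow_dvd_iff_le_factorization hn).1 hk
  exact (pow_dvd_pow p hk).trans (Int.natCast_dvd.1 (by exact_mod_cast h p hp))

theorem prime_pow_dvd_sum_divisors_moebius_mul {p r m : ℕ} (a : ℕ → ℤ) (hp : p.Prime)
    (hr : r ≠ 0) (hmp : m.Coprime p) (hm : 0 < m)
    (h : ∀ k : ℕ, k.Coprime p → 0 < k → (p : ℤ) ^ r ∣ a (k * p ^ r) - a (k * p ^ (r - 1))) :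
    (p : ℤ) ^ r ∣ ∑ d ∈ (m * p ^ r).divisors, (μ d : ℤ) * a (m * p ^ r / d) := by
  rw [(hmp.pow_right r).sum_divisors_mul_eq_sum_sum]
  refine dvd_sum fun e he => ?_
  have he : e ∣ m := Nat.dvd_of_mem_divisors he
  have hsplit : ∀ c ∈ (p ^ r).divisors, (μ (e * c) : ℤ) * a (m * p ^ r / (e * c)) =
      μ e * ((μ c : ℤ) * a (m / e * (p ^ r / c))) := by
    intro c hc
    have hc : c ∣ p ^ r := Nat.dvd_of_mem_divisors hc
    have hec : e.Coprime c := ((hmp.pow_right r).coprime_dvd_left he).coprime_dvd_right hc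
    rw [isMultiplicative_moebius.map_mul_of_coprime hec, Nat.mul_div_mul_comm he hc]
    ring
  have hpr : p ^ r / p = p ^ (r - 1) := by
    simpa using Nat.pow_div (Nat.one_le_iff_ne_zero.2 hr) hp.pos
  rw [sum_congr rfl hsplit, ← mul_sum, sum_divisors_prime_pow_moebius_mul hp hr, Nat.div_one, hpr]
  exact (h (m / e) (hmp.coprime_dvd_left (Nat.div_dvd_of_dvd he))
    (Nat.div_pos (Nat.le_of_dvd hm he) (Nat.pos_of_dvd_of_pos he hm))).mul_left _

/-- If `a : ℤ_{>0} → ℤ` satisfies `p^r ∣ a_{m p^r} - a_{m p^{r-1}}` for every prime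
`p`, `r ≥ 1` and `m` coprime to `p`, then `n ∣ (μ * a)(n) = ∑_{d ∣ n} μ(n/d) a_d`
for every `n > 0`. -/
theorem stmt12 (a : ℕ → ℤ)
    (h : ∀ p r m : ℕ, p.Prime → 1 ≤ r → Nat.Coprime m p → 0 < m →
      (p : ℤ) ^ r ∣ a (m * p ^ r) - a (m * p ^ (r - 1))) :
    ∀ n : ℕ, 0 < n →
      (n : ℤ) ∣ ∑ d ∈ n.divisors, (ArithmeticFunction.moebius (n / d) : ℤ) * a d := by
  intro n hn
  rw [Nat.sum_divisors_div_comm n fun i j => (μ i : ℤ) * a j]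
  refine Int.natCast_dvd_of_forall_prime_pow_factorization_dvd hn.ne' fun p hp => ?_
  set r := n.factorization p
  obtain hr | hr := eq_or_ne r 0
  · simp [hr]
  have hdvd := prime_pow_dvd_sum_divisors_moebius_mul a hp hr
    (Nat.coprime_ordCompl hp hn.ne').symm (Nat.ordCompl_pos p hn.ne')
    fun k hk hk0 => h p r k hp (Nat.one_le_iff_ne_zero.2 hr) hk hk0
  rwa [mul_comm, Nat.ordProj_mul_ordCompl_eq_self] at hdvd
end

section
/- Conversely, if a : ℤ_{>0} → ℤ satisfies n | (μ * a)(n) for all n > 0, then for every prime p, r ≥ 1 and m coprime to p, p^r divides a_{m p^r} - a_{m p^{r-1}}. -/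
/-!
Write `b = μ * a`, so that `a N = ∑_{d ∣ N} b d` by Möbius inversion. For `N = m p^r` and
`N' = m p^(r-1)`, the difference `a N - a N'` is the sum of `b d` over the divisors `d` of `N`
that do not divide `N'`. Each such `d` carries the full power `p^r`, and `d ∣ b d` by hypothesis.
-/

open ArithmeticFunction
open scoped ArithmeticFunction.Moebius

namespace Nat

theorem pow_dvd_of_dvd_mul_pow_of_not_dvd_mul_pow_pred {p d m r : ℕ} (hp : p.Prime)
    (hd : d ∣ m * p ^ r) (hd' : ¬ d ∣ m * p ^ (r - 1)) : p ^ r ∣ d := by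
  by_contra hpr
  apply hd'
  have hd0 : d ≠ 0 := by
    rintro rfl
    simp_all [hp.ne_zero]
  have hlt : d.factorization p < r := by
    by_contra! hle
    exact hpr ((pow_dvd_pow p hle).trans (ordProj_dvd d p))
  have hcop : Coprime (ordCompl[p] d) p := (coprime_ordCompl hp hd0).symm
  rw [← ordProj_mul_ordCompl_eq_self d p]
  refine (hcop.symm.pow_left _).mul_dvd_of_dvd_of_dvd ?_ ?_
  · exact dvd_mul_of_dvd_right (pow_dvd_pow p (by omega)) m
  · have hm : ordCompl[p] d ∣ m :=
      (hcop.pow_right r).dvd_of_dvd_mul_right ((ordCompl_dvd d p).trans hd)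
    exact hm.trans (dvd_mul_right m _)

end Nat

section MoebiusTransform

variable {R : Type*} [NonAssocRing R]

def moebiusTransform (a : ℕ → R) (n : ℕ) : R :=
  ∑ d ∈ n.divisors, (μ (n / d) : R) * a d

theorem sum_divisors_moebiusTransform (a : ℕ → R) {n : ℕ} (hn : 0 < n) :
    ∑ d ∈ n.divisors, moebiusTransform a d = a n := by
  revert n
  rw [sum_eq_iff_sum_mul_moebius_eq]
  intro n _
  exact Nat.sum_divisorsAntidiagonal' (f := fun x y => (μ x : R) * a y)

theorem sub_eq_sum_sdiff_divisors_moebiusTransform (a : ℕ → R) {N N' : ℕ} (hN : N ≠ 0)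
    (hN' : N' ≠ 0) (hdvd : N' ∣ N) :
    a N - a N' = ∑ d ∈ N.divisors \ N'.divisors, moebiusTransform a d := by
  rw [← sum_divisors_moebiusTransform a (Nat.pos_of_ne_zero hN),
    ← sum_divisors_moebiusTransform a (Nat.pos_of_ne_zero hN'),
    Finset.sum_sdiff_eq_sub (Nat.divisors_subset_of_dvd hN hdvd)]

end MoebiusTransform

/-- Conversely, if `a : ℤ_{>0} → ℤ` satisfies `n ∣ (μ * a)(n)` for all `n > 0`,
then `p^r ∣ a_{m p^r} - a_{m p^{r-1}}` for every prime `p`, `r ≥ 1` and `m`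
coprime to `p`. -/
theorem stmt13 (a : ℕ → ℤ)
    (h : ∀ n : ℕ, 0 < n →
      (n : ℤ) ∣ ∑ d ∈ n.divisors, (ArithmeticFunction.moebius (n / d) : ℤ) * a d) :
    ∀ p r m : ℕ, p.Prime → 1 ≤ r → Nat.Coprime m p → 0 < m →
      (p : ℤ) ^ r ∣ a (m * p ^ r) - a (m * p ^ (r - 1)) := by
  intro p r m hp hr _ hm
  have hp0 := hp.pos
  have hN' : m * p ^ (r - 1) ≠ 0 := by positivity
  have hdvd : m * p ^ (r - 1) ∣ m * p ^ r := mul_dvd_mul_left m (pow_dvd_pow p (by omega))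
  rw [sub_eq_sum_sdiff_divisors_moebiusTransform a (by positivity) hN' hdvd]
  refine Finset.dvd_sum fun d hd => ?_
  obtain ⟨hdN, hdN'⟩ := Finset.mem_sdiff.mp hd
  have hpr : p ^ r ∣ d := Nat.pow_dvd_of_dvd_mul_pow_of_not_dvd_mul_pow_pred hp
    (Nat.dvd_of_mem_divisors hdN) fun h' => hdN' (Nat.mem_divisors.mpr ⟨h', hN'⟩)
  have hd : (d : ℤ) ∣ moebiusTransform a d := by
    simpa only [moebiusTransform, Int.cast_id] using h d (Nat.pos_of_mem_divisors hdN)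
  exact (Int.natCast_dvd_natCast.mpr hpr).trans hd
end

section
/- Let p be a prime, r ≥ 1, and m coprime to p, and let d_n = ((1+√2)^n + (1-√2)^n)/2. If p^r ≠ 4 then p^r divides d_{p^r m} - d_{p^{r-1} m}; if p^r = 4 (so p = 2, r = 2, m odd) then 4 divides d_{4m} + d_{2m}. -/
/-!
Write `d_n` as the rational part of `σⁿ`, with `σ = 1 + √2 ∈ ℤ[√2]` the silver ratio.
For odd `p`, Frobenius and Euler's criterion give `z^p ≡ z` or `z^p ≡ z̄ (mod p)` for every
`z ∈ ℤ[√2]`; a congruence `a ≡ b (mod p)` lifts to `a^(p^k) ≡ b^(p^k) (mod p^(k+1))`, and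
conjugation does not change rational parts. For `p = 2`, the norm `N(σⁿ) = (-1)ⁿ` gives
`d_{2n} = 2 d_n² - (-1)ⁿ`; so every `d_n` is odd, and for even `n` both
`d_{2n} - 1 = 2 (d_n - 1)(d_n + 1)` and `d_{2n} - d_n = (2 d_n + 1)(d_n - 1)`, which lets the
power of `2` dividing `d_{2^k m} - 1` grow with `k` from `k = 2` on.
-/

namespace Zsqrtd

variable {d : ℤ}

theorem re_sq (z : ℤ√d) : (z ^ 2).re = 2 * z.re ^ 2 - z.norm := by
  simp only [sq, re_mul, norm_def]
  ring

theorem re_pow_star (z : ℤ√d) (n : ℕ) : (star z ^ n).re = (z ^ n).re := by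
  rw [← star_pow, re_star]

theorem natCast_pow_dvd_re {p k : ℕ} {z : ℤ√d} (h : (p : ℤ√d) ^ k ∣ z) :
    (p : ℤ) ^ k ∣ z.re := by
  have h' : (((p : ℤ) ^ k : ℤ) : ℤ√d) ∣ z := by exact_mod_cast h
  exact ((intCast_dvd _ _).1 h').1

-- `(a + b√d)^p ≡ a^p + d^((p-1)/2) b^p √d ≡ a + d^((p-1)/2) b √d (mod p)`
theorem natCast_dvd_pow_prime_sub {p : ℕ} (hp : p.Prime) (hodd : Odd p) (z : ℤ√d) :
    (p : ℤ√d) ∣ z ^ p - ⟨z.re, d ^ (p / 2) * z.im⟩ := by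
  obtain ⟨a, b⟩ := z
  obtain ⟨c, hc⟩ := exists_add_pow_prime_eq hp (a : ℤ√d) (sqrtd * (b : ℤ√d))
  have hsqrtd : (sqrtd : ℤ√d) ^ p = (d : ℤ√d) ^ (p / 2) * sqrtd := by
    conv_lhs => rw [← Nat.two_mul_div_two_add_one_of_odd hodd, pow_succ, pow_mul, sq, dmuld]
  have hfermat : ∀ n : ℤ, (p : ℤ√d) ∣ ((n ^ p - n : ℤ) : ℤ√d) := fun n => by
    exact_mod_cast
      (intCast_dvd_intCast (d := d) p _).2 (Int.ModEq.pow_prime_eq_self hp n).symm.dvd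
  have hsplit : (⟨a, b⟩ : ℤ√d) ^ p - ⟨a, d ^ (p / 2) * b⟩ =
      ((a ^ p - a : ℤ) : ℤ√d)
        + (d : ℤ√d) ^ (p / 2) * sqrtd * ((b ^ p - b : ℤ) : ℤ√d)
        + (p : ℤ√d) * (a : ℤ√d) * (sqrtd * (b : ℤ√d)) * c := by
    rw [decompose, decompose, hc, mul_pow, hsqrtd]
    push_cast
    ring
  rw [hsplit]
  exact dvd_add (dvd_add (hfermat a) (dvd_mul_of_dvd_right (hfermat b) _))
    (dvd_mul_of_dvd_left (dvd_mul_of_dvd_left (dvd_mul_right _ _) _) _)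

theorem natCast_dvd_pow_prime_sub_self_or_star {p : ℕ} (hp : p.Prime) (hodd : Odd p)
    (hpd : ¬ (p : ℤ) ∣ d) (z : ℤ√d) :
    (p : ℤ√d) ∣ z ^ p - z ∨ (p : ℤ√d) ∣ z ^ p - star z := by
  have : Fact p.Prime := ⟨hp⟩
  have hd0 : (d : ZMod p) ≠ 0 := by rwa [Ne, ZMod.intCast_zmod_eq_zero_iff_dvd]
  have hε : ∀ ε : ℤ, (d : ZMod p) ^ (p / 2) = ε →
      (p : ℤ√d) ∣ z ^ p - ⟨z.re, ε * z.im⟩ := by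
    intro ε h
    refine (dvd_sub_right (natCast_dvd_pow_prime_sub hp hodd z)).1 ?_
    have hdvd :=
      (ZMod.intCast_eq_intCast_iff_dvd_sub (d ^ (p / 2)) ε p).1 (by push_cast; exact h)
    rw [← Int.cast_natCast, intCast_dvd]
    simpa [← sub_mul] using dvd_mul_of_dvd_left hdvd z.im
  -- Euler's criterion: `d^((p-1)/2) ≡ ±1 (mod p)`.
  rcases ZMod.pow_div_two_eq_neg_one_or_one p hd0 with h | h
  · exact .inl (by simpa using hε 1 (by simpa using h))
  · exact .inr (by simpa [← star_mk] using hε (-1) (by simpa using h))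

theorem pow_succ_dvd_re_pow_prime_pow_sub {p : ℕ} (hp : p.Prime) (hodd : Odd p)
    (hpd : ¬ (p : ℤ) ∣ d) (z : ℤ√d) (k : ℕ) :
    (p : ℤ) ^ (k + 1) ∣ (z ^ p ^ (k + 1)).re - (z ^ p ^ k).re := by
  rw [pow_succ' p, pow_mul]
  rcases natCast_dvd_pow_prime_sub_self_or_star hp hodd hpd z with h | h
  · exact natCast_pow_dvd_re (by simpa using dvd_sub_pow_of_dvd_sub h k)
  · rw [← re_pow_star z]
    exact natCast_pow_dvd_re (by simpa using dvd_sub_pow_of_dvd_sub h k)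

end Zsqrtd

def silver : ℤ√2 := ⟨1, 1⟩

theorem eq_re_silver_pow (d : ℕ → ℤ)
    (hd : ∀ n : ℕ, (d n : ℝ) = ((1 + Real.sqrt 2) ^ n + (1 - Real.sqrt 2) ^ n) / 2)
    (n : ℕ) : d n = (silver ^ n).re := by
  let φ : ℤ√2 →+* ℝ := Zsqrtd.lift ⟨√2, by simp⟩
  have hφ (z : ℤ√2) : φ z = z.re + z.im * √2 := rfl
  have hplus : φ (silver ^ n) = (1 + √2) ^ n := by rw [map_pow, hφ]; simp [silver]
  have hminus : φ (star (silver ^ n)) = (1 - √2) ^ n := by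
    rw [star_pow, map_pow, hφ]; simp [silver, Zsqrtd.star_mk, sub_eq_add_neg]
  rw [hφ] at hplus hminus
  rw [← Int.cast_inj (α := ℝ), hd, ← hplus, ← hminus, Zsqrtd.re_star, Zsqrtd.im_star]
  push_cast
  ring

theorem norm_silver_pow (n : ℕ) : (silver ^ n).norm = (-1) ^ n := by
  change Zsqrtd.normMonoidHom (silver ^ n) = _
  rw [map_pow]
  rfl

theorem odd_re_silver_pow (n : ℕ) : Odd (silver ^ n).re := by
  induction n with
  | zero => simp
  | succ n ih =>
    rw [pow_succ, Zsqrtd.re_mul]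
    simpa [silver] using ih.add_even (even_two_mul (silver ^ n).im)

theorem re_silver_pow_two_mul (n : ℕ) :
    (silver ^ (2 * n)).re = 2 * (silver ^ n).re ^ 2 - (-1) ^ n := by
  rw [mul_comm, pow_mul, Zsqrtd.re_sq, norm_silver_pow]

theorem re_silver_pow_two_mul_of_even {n : ℕ} (hn : Even n) :
    (silver ^ (2 * n)).re = 2 * (silver ^ n).re ^ 2 - 1 := by
  rw [re_silver_pow_two_mul, hn.neg_one_pow]

theorem two_dvd_re_silver_pow_two_mul_sub (n : ℕ) :
    2 ∣ (silver ^ (2 * n)).re - (silver ^ n).re :=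
  even_iff_two_dvd.1 ((odd_re_silver_pow _).sub_odd (odd_re_silver_pow n))

theorem four_dvd_re_silver_pow_two_mul_add_one {m : ℕ} (hm : Odd m) :
    4 ∣ (silver ^ (2 * m)).re + 1 := by
  obtain ⟨u, hu⟩ := odd_re_silver_pow m
  rw [re_silver_pow_two_mul, hm.neg_one_pow, hu]
  exact ⟨2 * u ^ 2 + 2 * u + 1, by ring⟩

theorem four_dvd_re_silver_pow_four_mul_add {m : ℕ} (hm : Odd m) :
    4 ∣ (silver ^ (4 * m)).re + (silver ^ (2 * m)).re := by
  have h := re_silver_pow_two_mul_of_even (even_two_mul m)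
  rw [show 2 * (2 * m) = 4 * m by ring] at h
  rw [h, show ∀ b : ℤ, 2 * b ^ 2 - 1 + b = (2 * b - 1) * (b + 1) from fun b => by ring]
  exact dvd_mul_of_dvd_right (four_dvd_re_silver_pow_two_mul_add_one hm) _

theorem two_pow_dvd_re_silver_pow_two_pow_mul_sub_one {m : ℕ} (hm : Odd m) (j : ℕ) :
    2 ^ (j + 3) ∣ (silver ^ (2 ^ (j + 2) * m)).re - 1 := by
  have hfactor {n : ℕ} (hn : Even n) :
      (silver ^ (2 * n)).re - 1 = 2 * ((silver ^ n).re - 1) * ((silver ^ n).re + 1) := by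
    rw [re_silver_pow_two_mul_of_even hn]
    ring
  induction j with
  | zero =>
    rw [show 2 ^ (0 + 2) * m = 2 * (2 * m) by ring, hfactor (even_two_mul m)]
    have h2 : 2 ∣ (silver ^ (2 * m)).re - 1 :=
      even_iff_two_dvd.1 ((odd_re_silver_pow _).sub_odd odd_one)
    exact (by norm_num : (2 : ℤ) ^ (0 + 3) ∣ 2 * 2 * 4).trans
      (mul_dvd_mul (mul_dvd_mul_left 2 h2) (four_dvd_re_silver_pow_two_mul_add_one hm))
  | succ j ih =>
    rw [show 2 ^ (j + 1 + 2) * m = 2 * (2 ^ (j + 2) * m) by ring,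
      hfactor ((Nat.even_pow.2 ⟨even_two, by omega⟩).mul_right m), pow_succ']
    exact (mul_dvd_mul_left 2 ih).mul_right _

theorem two_pow_dvd_re_silver_pow_two_pow_mul_sub {m : ℕ} (hm : Odd m) (j : ℕ) :
    2 ^ (j + 3) ∣ (silver ^ (2 ^ (j + 3) * m)).re - (silver ^ (2 ^ (j + 2) * m)).re := by
  rw [show 2 ^ (j + 3) * m = 2 * (2 ^ (j + 2) * m) by ring,
    re_silver_pow_two_mul_of_even ((Nat.even_pow.2 ⟨even_two, by omega⟩).mul_right m),
    show ∀ a : ℤ, 2 * a ^ 2 - 1 - a = (2 * a + 1) * (a - 1) from fun a => by ring]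
  exact dvd_mul_of_dvd_right (two_pow_dvd_re_silver_pow_two_pow_mul_sub_one hm j) _

theorem pow_succ_dvd_re_silver_pow_sub {p : ℕ} (hp : p.Prime) (hodd : Odd p) (m k : ℕ) :
    (p : ℤ) ^ (k + 1) ∣ (silver ^ (p ^ (k + 1) * m)).re - (silver ^ (p ^ k * m)).re := by
  have hp2 : ¬ (p : ℤ) ∣ 2 := by
    rw [show (2 : ℤ) = (2 : ℕ) by rfl, Int.natCast_dvd_natCast,
      Nat.prime_dvd_prime_iff_eq hp Nat.prime_two]
    rintro rfl
    exact Nat.not_odd_iff_even.2 even_two hodd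
  simpa only [← pow_mul, mul_comm m] using
    Zsqrtd.pow_succ_dvd_re_pow_prime_pow_sub hp hodd hp2 (silver ^ m) k

theorem stmt17_general (d : ℕ → ℤ)
    (hd : ∀ n : ℕ, (d n : ℝ) = ((1 + Real.sqrt 2) ^ n + (1 - Real.sqrt 2) ^ n) / 2)
    (p r m : ℕ) (hp : p.Prime) (hr : 1 ≤ r) (hm : Nat.Coprime m p) :
    (p ^ r ≠ 4 → (p : ℤ) ^ r ∣ d (p ^ r * m) - d (p ^ (r - 1) * m)) ∧
      (p ^ r = 4 → (4 : ℤ) ∣ d (4 * m) + d (2 * m)) := by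
  obtain rfl : d = fun n => (silver ^ n).re := funext (eq_re_silver_pow d hd)
  obtain ⟨r, rfl⟩ := Nat.exists_eq_add_of_le' hr
  rcases hp.eq_two_or_odd' with rfl | hodd
  · have hm : Odd m := Nat.coprime_two_right.mp hm
    refine ⟨fun h4 => ?_, fun _ => four_dvd_re_silver_pow_four_mul_add hm⟩
    match r, h4 with
    | 0, _ => simpa using two_dvd_re_silver_pow_two_mul_sub m
    | 1, h4 => exact absurd rfl h4
    | j + 2, _ => exact_mod_cast two_pow_dvd_re_silver_pow_two_pow_mul_sub hm j
  · refine ⟨fun _ => pow_succ_dvd_re_silver_pow_sub hp hodd m r, fun h4 => ?_⟩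
    exact absurd (h4 ▸ hodd.pow) (by decide)

/-- Let `d_n = ((1+√2)^n + (1-√2)^n)/2` (an integer-valued sequence), `p` prime,
`r ≥ 1` and `m` coprime to `p`.  If `p^r ≠ 4` then `p^r ∣ d_{p^r m} - d_{p^{r-1} m}`;
if `p^r = 4` then `4 ∣ d_{4m} + d_{2m}`. -/
theorem stmt17 (d : ℕ → ℤ)
    (hd : ∀ n : ℕ, (d n : ℝ) = ((1 + Real.sqrt 2) ^ n + (1 - Real.sqrt 2) ^ n) / 2)
    (p r m : ℕ) (hp : p.Prime) (hr : 1 ≤ r) (hm : Nat.Coprime m p) (hm0 : 0 < m) :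
    (p ^ r ≠ 4 → (p : ℤ) ^ r ∣ d (p ^ r * m) - d (p ^ (r - 1) * m)) ∧
      (p ^ r = 4 → (4 : ℤ) ∣ d (4 * m) + d (2 * m)) :=
  stmt17_general d hd p r m hp hr hm
end
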